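/- arXiv:2405.13146 — 3 statements merged into one kernel-verified Lean document; each statement's English description precedes it below -/
import Mathlib

section
/- For every finite set G of natural numbers and every natural number i, the product of x k over k ∈ (Finset.Icc i N) \ G equals φ i multiplied by the product of (φ j * φ (j+1)) over j ∈ (Finset.Icc i N) ∩ G. (This is the identity Eq. (8) of the paper expressing the hidden features purely in terms of the observable features φ.) -/
/-!
Every factor squares to one, so the tail products `φ j = ∏_{k ∈ [j, N]} x k` satisfy
`φ j * φ (j + 1) = x j` for `j ≤ N`. Hence the right-hand side is `φ i` times the product of
`x` over `[i, N] ∩ G`, and multiplying `φ i` by that product once more cancels exactly those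
factors of `φ i`.
-/

namespace Finset

variable {M : Type*} [CommMonoid M]

theorem prod_mul_prod_self_eq_one {ι : Type*} {s : Finset ι} {f : ι → M}
    (hf : ∀ k ∈ s, f k * f k = 1) : (∏ k ∈ s, f k) * ∏ k ∈ s, f k = 1 := by
  rw [← prod_mul_distrib]
  exact prod_eq_one hf

variable {f : ℕ → M}

theorem prod_Icc_mul_prod_Icc_add_one (hf : ∀ k, f k * f k = 1) {j N : ℕ} (hj : j ≤ N) :
    (∏ k ∈ Icc j N, f k) * ∏ k ∈ Icc (j + 1) N, f k = f j := by
  rw [← insert_Icc_add_one_left_eq_Icc hj, prod_insert (by simp), mul_assoc,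
    prod_mul_prod_self_eq_one fun k _ => hf k, mul_one]

theorem prod_Icc_sdiff_eq_of_mul_self_eq_one (hf : ∀ k, f k * f k = 1) (N i : ℕ)
    (G : Finset ℕ) :
    ∏ k ∈ Icc i N \ G, f k = (∏ k ∈ Icc i N, f k) *
      ∏ j ∈ Icc i N ∩ G, ((∏ k ∈ Icc j N, f k) * ∏ k ∈ Icc (j + 1) N, f k) := by
  have hinter : ∏ j ∈ Icc i N ∩ G, ((∏ k ∈ Icc j N, f k) * ∏ k ∈ Icc (j + 1) N, f k) =
      ∏ j ∈ Icc i N ∩ G, f j :=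
    prod_congr rfl fun j hj => prod_Icc_mul_prod_Icc_add_one hf (mem_Icc.1 (mem_inter.1 hj).1).2
  rw [hinter, ← prod_inter_mul_prod_sdiff (Icc i N) G, mul_comm, ← mul_assoc,
    prod_mul_prod_self_eq_one fun k _ => hf k, one_mul]

end Finset

theorem stmt2_general (N : ℕ) (x : ℕ → ℤ)
    (hx : ∀ k, x k = 1 ∨ x k = -1)
    (φ : ℕ → ℤ) (hφ : ∀ i, φ i = ∏ k ∈ Finset.Icc i N, x k) :
    ∀ (G : Finset ℕ) (i : ℕ),
      ∏ k ∈ Finset.Icc i N \ G, x k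
        = φ i * ∏ j ∈ Finset.Icc i N ∩ G, (φ j * φ (j + 1)) := by
  intro G i
  have hx_sq : ∀ k, x k * x k = 1 := fun k => by rcases hx k with h | h <;> simp [h]
  simp only [hφ]
  exact Finset.prod_Icc_sdiff_eq_of_mul_self_eq_one hx_sq N i G

/-- For every finite set `G` of naturals and every `i`,
`∏_{k ∈ Icc i N \ G} x k = φ i * ∏_{j ∈ Icc i N ∩ G} (φ j * φ (j+1))`. -/
theorem stmt2 (N : ℕ) (hN : 1 ≤ N) (x : ℕ → ℤ)
    (hx : ∀ k, x k = 1 ∨ x k = -1)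
    (φ : ℕ → ℤ) (hφ : ∀ i, φ i = ∏ k ∈ Finset.Icc i N, x k) :
    ∀ (G : Finset ℕ) (i : ℕ),
      ∏ k ∈ Finset.Icc i N \ G, x k
        = φ i * ∏ j ∈ Finset.Icc i N ∩ G, (φ j * φ (j + 1)) :=
  stmt2_general N x hx φ hφ
end

section
/- The observable features factor through the hidden features and the ghost bits as follows: (a) for every i with 1 ≤ i < ι 0, φ i = φ* i * ∏_{j : Fin m} (2 * b (ι j) − 1); (b) for every k with k + 1 ≤ m − 1 and every i with ι k < i < ι (k+1), φ i = φ* (i − (k+1)) * ∏_{j : Fin m, j ≥ k+1} (2 * b (ι j) − 1); (c) for every i with ι (m−1) < i ≤ n + m, φ i = φ* (i − m). -/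
/-!
Write `g(k)` for the number of ghost positions below `k`. Every non-ghost position `k` carries
the hidden bit `c (k - g(k))`, and `k ↦ k - g(k)` runs through the interval `[i - g(i), n]`
without gaps or repetitions as `k` runs through the non-ghost positions of `[i, n + m]`.
So the observable product over `[i, n + m]` is the hidden product over `[i - g(i), n]` times
the factors of the ghost positions `≥ i`; in the three regimes of the theorem `g(i)` is
`0`, `k + 1` and `m`.
-/

open Finset

def countBelow (S : Finset ℕ) (k : ℕ) : ℕ := #{s ∈ S | s < k}

section countBelow

variable (S : Finset ℕ)

theorem countBelow_le (k : ℕ) : countBelow S k ≤ k :=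
  (card_le_card fun _ hs => mem_range.2 (mem_filter.1 hs).2).trans_eq (card_range k)

theorem countBelow_succ_of_mem {k : ℕ} (hk : k ∈ S) :
    countBelow S (k + 1) = countBelow S k + 1 := by
  have : {s ∈ S | s < k + 1} = insert k {s ∈ S | s < k} := by
    ext s
    simp only [mem_filter, mem_insert]
    grind
  rw [countBelow, this, card_insert_of_notMem (by simp)]
  rfl

theorem countBelow_succ_of_notMem {k : ℕ} (hk : k ∉ S) :
    countBelow S (k + 1) = countBelow S k := by
  unfold countBelow
  congr 1
  ext s
  simp only [mem_filter]
  grind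

theorem monotone_sub_countBelow : Monotone fun k => k - countBelow S k := by
  refine monotone_nat_of_le_succ fun k => ?_
  by_cases hk : k ∈ S
  · simp [countBelow_succ_of_mem S hk]
  · have := countBelow_le S k
    simp only [countBelow_succ_of_notMem S hk]
    omega

theorem prod_Ico_eq_prod_Ico_sub_countBelow_mul {α : Type*} [CommMonoid α]
    (f g : ℕ → α) {i N : ℕ} (hiN : i ≤ N)
    (hfg : ∀ k ∈ Ico i N, k ∉ S → g (k - countBelow S k) = f k) :
    ∏ k ∈ Ico i N, f k =
      (∏ k ∈ Ico (i - countBelow S i) (N - countBelow S N), g k) *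
        ∏ s ∈ S ∩ Ico i N, f s := by
  induction N, hiN using Nat.le_induction with
  | base => simp
  | succ N hiN ih =>
    rw [prod_Ico_succ_top hiN, ih fun k hk => hfg k (Ico_subset_Ico_right N.le_succ hk)]
    by_cases hN : N ∈ S
    · have : S ∩ Ico i (N + 1) = insert N (S ∩ Ico i N) := by
        rw [Nat.Ico_succ_right_eq_insert_Ico hiN, inter_insert_of_mem hN]
      rw [countBelow_succ_of_mem S hN, Nat.add_sub_add_right, this,
        prod_insert (by simp), mul_left_comm, mul_comm]
    · have : S ∩ Ico i (N + 1) = S ∩ Ico i N := by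
        rw [Nat.Ico_succ_right_eq_insert_Ico hiN, inter_insert_of_notMem hN]
      rw [countBelow_succ_of_notMem S hN, Nat.sub_add_comm (countBelow_le S N),
        prod_Ico_succ_top (monotone_sub_countBelow S hiN),
        hfg N (mem_Ico.2 ⟨hiN, N.lt_succ_self⟩) hN, this, mul_right_comm]

end countBelow

section StrictMono

variable {m : ℕ} {ι : Fin m → ℕ}

theorem countBelow_image (hι : Function.Injective ι) (k : ℕ) :
    countBelow (univ.image ι) k = #{j | ι j < k} := by
  rw [countBelow, filter_image, card_image_of_injective _ hι]

theorem Monotone.lt_iff_lt_card_filter_lt (hι : Monotone ι) (x : ℕ) (j : Fin m) :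
    ι j < x ↔ (j : ℕ) < #{j | ι j < x} := by
  constructor
  · intro hj
    have : Iic j ⊆ ({j | ι j < x} : Finset (Fin m)) := fun j' hj' =>
      mem_filter.2 ⟨mem_univ _, (hι (mem_Iic.1 hj')).trans_lt hj⟩
    simpa [Fin.card_Iic] using card_le_card this
  · intro hj
    by_contra hjx
    have : ({j | ι j < x} : Finset (Fin m)) ⊆ Iio j := fun j' hj' => by
      simp only [mem_filter, mem_univ, true_and] at hj'
      exact mem_Iio.2 (lt_of_not_ge fun h => hjx ((hι h).trans_lt hj'))
    have := card_le_card this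
    simp only [Fin.card_Iio] at this
    omega

theorem Monotone.lt_iff_of_between (hι : Monotone ι) {x r : ℕ} (hr : r ≤ m)
    (hbelow : ∀ j : Fin m, (j : ℕ) + 1 = r → ι j < x)
    (habove : ∀ j : Fin m, (j : ℕ) = r → x ≤ ι j) (j : Fin m) :
    ι j < x ↔ (j : ℕ) < r := by
  constructor
  · intro hj
    by_contra hrj
    have hrm : r < m := by omega
    have hrj : (⟨r, hrm⟩ : Fin m) ≤ j := Fin.le_def.2 (show r ≤ (j : ℕ) by omega)
    exact (habove ⟨r, hrm⟩ rfl).not_gt ((hι hrj).trans_lt hj)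
  · intro hj
    have hjr : j ≤ ⟨r - 1, by omega⟩ := Fin.le_def.2 (show (j : ℕ) ≤ r - 1 by omega)
    exact (hι hjr).trans_lt (hbelow _ (show r - 1 + 1 = r by omega))

theorem card_filter_eq_of_lt_iff {x r : ℕ} (hr : r ≤ m)
    (hgap : ∀ j : Fin m, ι j < x ↔ (j : ℕ) < r) :
    #{j | ι j < x} = r := by
  simp only [hgap, Fin.card_filter_val_lt]
  omega

theorem prod_Ico_eq_prod_Ico_sub_mul_prod_of_lt_iff {α : Type*} [CommMonoid α] {f g : ℕ → α}
    (hι : StrictMono ι) {i r N : ℕ} (hiN : i ≤ N) (hιN : ∀ j, ι j < N) (hr : r ≤ m)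
    (hgap : ∀ j : Fin m, ι j < i ↔ (j : ℕ) < r)
    (hfg : ∀ k ∈ Ico i N, k ∉ Set.range ι → g (k - #{j | ι j < k}) = f k) :
    ∏ k ∈ Ico i N, f k =
      (∏ k ∈ Ico (i - r) (N - m), g k) *
        ∏ j ∈ univ.filter (fun j : Fin m => r ≤ (j : ℕ)), f (ι j) := by
  have hghost :
      univ.image ι ∩ Ico i N = (univ.filter fun j : Fin m => r ≤ (j : ℕ)).image ι := by
    ext s
    simp only [mem_inter, mem_image, mem_univ, true_and, mem_Ico, mem_filter]
    constructor
    · rintro ⟨⟨j, rfl⟩, hi, -⟩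
      exact ⟨j, not_lt.1 fun h => (not_lt.2 hi) ((hgap j).2 h), rfl⟩
    · rintro ⟨j, hj, rfl⟩
      exact ⟨⟨j, rfl⟩, not_lt.1 fun h => (not_lt.2 hj) ((hgap j).1 h), hιN j⟩
  have hall : #{j | ι j < N} = m := card_filter_eq_of_lt_iff le_rfl fun j => by simp [hιN j]
  have hfg_image :
      ∀ k ∈ Ico i N, k ∉ univ.image ι → g (k - countBelow (univ.image ι) k) = f k :=
    fun k hk hkι => by
      rw [countBelow_image hι.injective]
      exact hfg k hk (by simpa using hkι)
  rw [prod_Ico_eq_prod_Ico_sub_countBelow_mul _ f g hiN hfg_image, countBelow_image hι.injective,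
    countBelow_image hι.injective, card_filter_eq_of_lt_iff hr hgap, hall, hghost,
    prod_image hι.injective.injOn]

end StrictMono

theorem sub_card_filter_lt_eq_of_notMem_range {n m : ℕ} (hm : 0 < m)
    {ι : Fin m → ℕ} (hmono : StrictMono ι) {b c : ℕ → ℤ}
    (hc1 : ∀ i, 1 ≤ i → i < ι ⟨0, hm⟩ → c i = b i)
    (hc2 : ∀ k (hk : k + 1 < m), ∀ i,
      ι ⟨k, by omega⟩ < i → i < ι ⟨k + 1, hk⟩ → c (i - (k + 1)) = b i)
    (hc3 : ∀ i, ι ⟨m - 1, by omega⟩ < i → i ≤ n + m → c (i - m) = b i)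
    {x : ℕ} (hx1 : 1 ≤ x) (hxn : x ≤ n + m) (hx : x ∉ Set.range ι) :
    c (x - #{j | ι j < x}) = b x := by
  have hgap := hmono.monotone.lt_iff_lt_card_filter_lt x
  have hr_le : #{j | ι j < x} ≤ m := (card_filter_le _ _).trans_eq (card_fin m)
  generalize #{j | ι j < x} = r at hgap hr_le ⊢
  have hlt_of_le (j : Fin m) (h : x ≤ ι j) : x < ι j := h.lt_of_ne fun h' => hx ⟨j, h'.symm⟩
  obtain hr0 | hr_pos := Nat.eq_zero_or_pos r
  · rw [hr0, Nat.sub_zero]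
    exact hc1 x hx1 (hlt_of_le _ (not_lt.1 fun h => by simpa [hr0] using (hgap _).1 h))
  obtain hr_lt | rfl := hr_le.lt_or_eq
  · obtain ⟨k, rfl⟩ : ∃ k, r = k + 1 := ⟨r - 1, by omega⟩
    exact hc2 k (by omega) x ((hgap _).2 (by simp))
      (hlt_of_le _ (not_lt.1 fun h => by simpa using (hgap _).1 h))
  · exact hc3 x ((hgap _).2 (Nat.sub_lt hr_pos Nat.one_pos)) hxn

/-- the observable features factor through the hidden features
and the ghost bits. -/
theorem stmt3 (n m : ℕ) (hm : 1 ≤ m)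
    (ι : Fin m → ℕ) (hmono : StrictMono ι)
    (hlast : ι ⟨m - 1, by omega⟩ ≤ n + m)
    (b : ℕ → ℤ)
    (c : ℕ → ℤ)
    (hc1 : ∀ i, 1 ≤ i → i < ι ⟨0, hm⟩ → c i = b i)
    (hc2 : ∀ k (hk : k + 1 ≤ m - 1), ∀ i,
      ι ⟨k, by omega⟩ < i → i < ι ⟨k + 1, by omega⟩ → c (i - (k + 1)) = b i)
    (hc3 : ∀ i, ι ⟨m - 1, by omega⟩ < i → i ≤ n + m → c (i - m) = b i)
    (φs : ℕ → ℤ) (hφs : ∀ i, φs i = ∏ k ∈ Finset.Icc i n, (2 * c k - 1))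
    (φ : ℕ → ℤ) (hφ : ∀ i, φ i = ∏ k ∈ Finset.Icc i (n + m), (2 * b k - 1)) :
    (∀ i, 1 ≤ i → i < ι ⟨0, hm⟩ →
      φ i = φs i * ∏ j : Fin m, (2 * b (ι j) - 1)) ∧
    (∀ k (hk : k + 1 ≤ m - 1), ∀ i,
      ι ⟨k, by omega⟩ < i → i < ι ⟨k + 1, by omega⟩ →
      φ i = φs (i - (k + 1)) *
        ∏ j ∈ Finset.univ.filter (fun j : Fin m => k + 1 ≤ (j : ℕ)),
          (2 * b (ι j) - 1)) ∧
    (∀ i, ι ⟨m - 1, by omega⟩ < i → i ≤ n + m → φ i = φs (i - m)) := by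
  have hιN (j : Fin m) : ι j < n + m + 1 :=
    have hj : j ≤ ⟨m - 1, by omega⟩ := Fin.le_def.2 (Nat.le_sub_one_of_lt j.isLt)
    Nat.lt_succ_of_le ((hmono.monotone hj).trans hlast)
  have hfactor (i r : ℕ) (hi : 1 ≤ i) (hiN : i ≤ n + m + 1) (hr : r ≤ m)
      (hgap : ∀ j : Fin m, ι j < i ↔ (j : ℕ) < r) :
      φ i = φs (i - r) *
        ∏ j ∈ univ.filter (fun j : Fin m => r ≤ (j : ℕ)), (2 * b (ι j) - 1) := by
    rw [hφ, hφs, ← Ico_add_one_right_eq_Icc, ← Ico_add_one_right_eq_Icc,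
      show n + 1 = n + m + 1 - m by omega]
    refine prod_Ico_eq_prod_Ico_sub_mul_prod_of_lt_iff hmono hiN hιN hr hgap fun k hk hkι => ?_
    rw [sub_card_filter_lt_eq_of_notMem_range hm hmono hc1 (fun k hk => hc2 k (by omega)) hc3
      (hi.trans (mem_Ico.1 hk).1) (Nat.le_of_lt_succ (mem_Ico.1 hk).2) hkι]
  refine ⟨fun i hi hi0 => ?_, fun k hk i hki hik => ?_, fun i hi hin => ?_⟩
  · have hgap := hmono.monotone.lt_iff_of_between (x := i) (r := 0) (Nat.zero_le m)
      (by simp) fun j hj => (Fin.ext hj : j = ⟨0, hm⟩) ▸ hi0.le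
    rw [hfactor i 0 hi (by have := hιN ⟨0, hm⟩; omega) (Nat.zero_le m) hgap]
    simp
  · have hgap := hmono.monotone.lt_iff_of_between (x := i) (r := k + 1) (by omega)
      (fun j hj => (Fin.ext (show (j : ℕ) = k by omega) : j = ⟨k, by omega⟩) ▸ hki)
      (fun j hj => (Fin.ext hj : j = ⟨k + 1, by omega⟩) ▸ hik.le)
    have := hιN ⟨k + 1, by omega⟩
    exact hfactor i (k + 1) (by omega) (by omega) (by omega) hgap
  · have hgap := hmono.monotone.lt_iff_of_between (x := i) (r := m) le_rfl
      (fun j hj => (Fin.ext (show (j : ℕ) = m - 1 by omega) : j = ⟨m - 1, _⟩) ▸ hi)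
      (fun j hj => absurd hj j.isLt.ne)
    rw [hfactor i m (by omega) (by omega) le_rfl hgap,
      filter_false_of_mem fun j _ => not_le.2 j.isLt, prod_empty, mul_one]
end

section
/- Let M = 84 (corresponding to n = 64 PUF stages and m = 20 ghost bits) and N = 10^6, and fix a coordinate i : Fin 84. Under the uniform probability measure on Fin N → (Fin M → Bool), the probability that there exist distinct indices a, b : Fin N such that f a and f b differ exactly in coordinate i is less than (1/2)^45. -/
/-!
Union bound over the `N.choose 2` unordered pairs `{a, b}`. For a fixed pair, `f b` is uniform and
independent of `f a`, so it equals the word `f a` with bit `i` flipped with probability `2⁻⁸⁴`.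
Since `(10⁶).choose 2 < 2³⁹`, the total is below `2⁻⁴⁵` (ordered pairs, `10¹² > 2³⁹`, would not do).
-/

open MeasureTheory ENNReal Finset

lemma measure_setOf_exists_ne_le_choose_two_mul {Ω ι : Type*} [MeasurableSpace Ω] [Fintype ι]
    [LinearOrder ι] (μ : Measure Ω) (E : ι → ι → Set Ω) (hsymm : ∀ a b, E a b ⊆ E b a)
    {ε : ℝ≥0∞} (hE : ∀ a b, a < b → μ (E a b) ≤ ε) :
    μ {ω | ∃ a b, a ≠ b ∧ ω ∈ E a b} ≤ (Fintype.card ι).choose 2 * ε := by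
  set P : Finset (ι × ι) := {p ∈ univ ×ˢ univ | p.1 < p.2}
  have hsub : {ω | ∃ a b, a ≠ b ∧ ω ∈ E a b} ⊆ ⋃ p ∈ P, E p.1 p.2 := by
    rintro ω ⟨a, b, hab, hω⟩
    simp only [Set.mem_iUnion, exists_prop]
    rcases hab.lt_or_gt with h | h
    · exact ⟨(a, b), by simp [P, h], hω⟩
    · exact ⟨(b, a), by simp [P, h], hsymm a b hω⟩
  calc μ _ ≤ μ (⋃ p ∈ P, E p.1 p.2) := measure_mono hsub
    _ ≤ ∑ p ∈ P, μ (E p.1 p.2) := measure_biUnion_finset_le P _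
    _ ≤ ∑ _p ∈ P, ε := sum_le_sum fun p hp => hE _ _ (mem_filter.1 hp).2
    _ = _ := by rw [sum_const, nsmul_eq_mul, card_product_filter_lt, card_univ]

section UniformPi

variable {ι β : Type*} [Fintype ι] [DecidableEq ι] [Fintype β] {a b : ι}

lemma Fintype.card_setOf_apply_eq_comp_apply_le (hab : a ≠ b) (g : β → β)
    [Fintype {f : ι → β | f b = g (f a)}] :
    Fintype.card {f : ι → β | f b = g (f a)} ≤ Fintype.card β ^ (Fintype.card ι - 1) := by
  have hinj : Function.Injective
      fun (f : {f : ι → β | f b = g (f a)}) (c : {c // c ≠ b}) => f.1 c.1 := by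
    rintro ⟨f, hf⟩ ⟨f', hf'⟩ h
    have hoff : ∀ c, c ≠ b → f c = f' c := fun c hc => congrFun h ⟨c, hc⟩
    refine Subtype.ext (funext fun c => ?_)
    by_cases hc : c = b
    · subst hc
      exact (hf.trans (congrArg g (hoff a hab))).trans hf'.symm
    · exact hoff c hc
  calc _ ≤ Fintype.card ({c // c ≠ b} → β) := Fintype.card_le_of_injective _ hinj
    _ = _ := by rw [Fintype.card_fun, Fintype.card_subtype_compl, Fintype.card_subtype_eq]

lemma PMF.toMeasure_uniformOfFintype_setOf_apply_eq_comp_apply_le [Nonempty β]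
    [MeasurableSpace β] [MeasurableSingletonClass β] (hab : a ≠ b) (g : β → β) :
    (PMF.uniformOfFintype (ι → β)).toMeasure {f | f b = g (f a)}
      ≤ (Fintype.card β : ℝ≥0∞)⁻¹ := by
  classical
  have hι : Fintype.card ι = Fintype.card ι - 1 + 1 :=
    (Nat.sub_add_cancel (Fintype.card_pos_iff.2 ⟨a⟩)).symm
  have hβ : (Fintype.card β : ℝ≥0∞) ≠ 0 := by simp
  rw [PMF.toMeasure_uniformOfFintype_apply _ (Set.toFinite _).measurableSet, Fintype.card_fun, hι,
    pow_succ, Nat.cast_mul]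
  refine ENNReal.div_le_of_le_mul ?_
  rw [mul_comm, mul_assoc, ENNReal.mul_inv_cancel hβ (by simp), mul_one]
  exact_mod_cast Fintype.card_setOf_apply_eq_comp_apply_le hab g

end UniformPi

lemma eq_update_not_iff {ι : Type*} [DecidableEq ι] {x y : ι → Bool} {i : ι} :
    y = Function.update x i (!x i) ↔ (∀ j, j ≠ i → x j = y j) ∧ x i ≠ y i := by
  constructor
  · rintro rfl
    exact ⟨fun j hj => (Function.update_of_ne hj _ _).symm, by simp⟩
  · rintro ⟨hoff, hi⟩
    funext j
    by_cases hj : j = i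
    · subst hj
      simpa using Bool.eq_not_iff.mpr (Ne.symm hi)
    · rw [Function.update_of_ne hj, hoff j hj]

/-- with `M = 84` (`n = 64` PUF stages and `m = 20` ghost bits) and
`N = 10^6` passively accumulated challenges, under the uniform probability measure
on `Fin N → (Fin M → Bool)` the probability that some two distinct challenges
differ exactly in a fixed coordinate `i` is less than `(1/2)^45`. -/
theorem stmt14 (i : Fin 84) :
    (PMF.uniformOfFintype (Fin (10 ^ 6) → Fin 84 → Bool)).toMeasure
        {f | ∃ a b : Fin (10 ^ 6), a ≠ b ∧
          (∀ j, j ≠ i → f a j = f b j) ∧ f a i ≠ f b i}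
      < ENNReal.ofReal ((1 / 2 : ℝ) ^ 45) := by
  set E : Fin (10 ^ 6) → Fin (10 ^ 6) → Set (Fin (10 ^ 6) → Fin 84 → Bool) :=
    fun a b => {f | (∀ j, j ≠ i → f a j = f b j) ∧ f a i ≠ f b i}
  have hsymm : ∀ a b, E a b ⊆ E b a :=
    fun a b f ⟨hoff, hi⟩ => ⟨fun j hj => (hoff j hj).symm, hi.symm⟩
  have hE : ∀ a b, a < b → (PMF.uniformOfFintype _).toMeasure (E a b)
      ≤ (Fintype.card (Fin 84 → Bool) : ℝ≥0∞)⁻¹ := fun a b hab => by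
    simpa only [E, eq_update_not_iff] using
      PMF.toMeasure_uniformOfFintype_setOf_apply_eq_comp_apply_le hab.ne
        (fun x : Fin 84 → Bool => Function.update x i (!x i))
  have hnum : ((Fintype.card (Fin (10 ^ 6))).choose 2 : ℝ≥0∞)
      * (Fintype.card (Fin 84 → Bool) : ℝ≥0∞)⁻¹ < ENNReal.ofReal ((1 / 2 : ℝ) ^ 45) := by
    have h : ((10 ^ 6 : ℕ).choose 2 : ℝ) * ((2 ^ 84 : ℕ) : ℝ)⁻¹ < (1 / 2) ^ 45 := by
      rw [Nat.choose_two_right]; norm_num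
    rw [Fintype.card_fun, Fintype.card_bool, Fintype.card_fin, Fintype.card_fin,
      ← ENNReal.ofReal_natCast, ← ENNReal.ofReal_natCast,
      ← ENNReal.ofReal_inv_of_pos (by positivity), ← ENNReal.ofReal_mul (by positivity)]
    exact (ENNReal.ofReal_lt_ofReal_iff (by positivity)).2 h
  exact (measure_setOf_exists_ne_le_choose_two_mul _ E hsymm hE).trans_lt hnum
end
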